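/- Let k and m be positive integers. The number of fillings Q of the hook diagram (k,1^m) by nonnegative even integers that are strictly increasing across the row, weakly increasing down the column, and satisfy Q(b') ≤ 2 and Q(b) ≤ Q(b') + 2k − 2 (where b is the last box of the row and b' is the last box of the column) is exactly 2 + km. -/

import Mathlib

/-!
The column is monotone with last entry at most `2`, so it is a `0`/`2` step function. An even
strictly increasing row gains at least `2` per box, so the bound `Q(b) ≤ 2k` at its end forces
`Q(1, j+1) ∈ {2j, 2j+2}`: the row is `2j` plus a `0`/`2` step function. A filling is therefore a
pair of jump positions `(c, s) ∈ [0, k] × [0, m]`, and the two boundary conditions rule out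
exactly `c = 0 < s` and `c < k = s`. What remains is `(0, 0)`, `(k, m)` and the `k * m` pairs
with `0 < c` and `s < m`.
-/

open Finset

namespace HookFilling

def zeroTwoStep {n : ℕ} (t : Fin (n + 1)) : Fin n → ℕ := fun i => if (t : ℕ) ≤ i then 2 else 0

section zeroTwoStep

variable {n : ℕ}

lemma zeroTwoStep_eq_zero_or_two (t : Fin (n + 1)) (i : Fin n) :
    zeroTwoStep t i = 0 ∨ zeroTwoStep t i = 2 := by
  unfold zeroTwoStep; split_ifs <;> simp

lemma zeroTwoStep_monotone (t : Fin (n + 1)) : Monotone (zeroTwoStep t) := by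
  intro i j hij
  have : (i : ℕ) ≤ j := hij
  unfold zeroTwoStep; split_ifs <;> omega

lemma zeroTwoStep_injective : Function.Injective (zeroTwoStep (n := n)) := by
  intro t t' h
  by_contra hne
  wlog hlt : t < t' generalizing t t'
  · exact this h.symm (Ne.symm hne) ((not_lt.mp hlt).lt_of_ne (Ne.symm hne))
  have hi : (t : ℕ) < n := by have := t'.isLt; omega
  have := congrFun h ⟨t, hi⟩
  simp only [zeroTwoStep, le_refl, if_true] at this
  split_ifs at this with h'
  exact absurd h' (not_le.mpr hlt)

lemma zeroTwoStep_first (hn : 0 < n) (t : Fin (n + 1)) :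
    zeroTwoStep t ⟨0, hn⟩ = if t = 0 then 2 else 0 := by
  simp only [zeroTwoStep, Fin.ext_iff, Fin.val_zero]
  split_ifs <;> omega

lemma zeroTwoStep_last (hn : 0 < n) (t : Fin (n + 1)) :
    zeroTwoStep t ⟨n - 1, Nat.sub_lt hn Nat.one_pos⟩ = if t = Fin.last n then 0 else 2 := by
  simp only [zeroTwoStep, Fin.ext_iff, Fin.val_last]
  split_ifs <;> omega

lemma exists_zeroTwoStep_eq {g : Fin n → ℕ} (hg : Monotone g) (hval : ∀ i, g i = 0 ∨ g i = 2) :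
    ∃ t, zeroTwoStep t = g := by
  have hup : IsUpperSet {i | g i = 2} := fun i j hij (hi : g i = 2) => by
    have := hg hij
    rcases hval j with h | h <;> simp_all
  rcases hup.eq_empty_or_Ici with hempty | ⟨a, ha⟩
  · refine ⟨Fin.last n, funext fun i => ?_⟩
    have hi : g i ≠ 2 := fun h => (Set.eq_empty_iff_forall_notMem.mp hempty) i h
    have := i.isLt
    simp only [zeroTwoStep, Fin.val_last]
    rcases hval i with h | h <;> simp_all
  · refine ⟨a.castSucc, funext fun i => ?_⟩
    have hi : g i = 2 ↔ a ≤ i := Set.ext_iff.mp ha i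
    simp only [zeroTwoStep, Fin.val_castSucc, ← Fin.le_def]
    rcases hval i with h | h <;> simp_all

end zeroTwoStep

lemma add_two_mul_le_of_strictMono {n : ℕ} {f : Fin n → ℕ} (hf : StrictMono f)
    (heven : ∀ i, 2 ∣ f i) {i j : Fin n} (hij : i ≤ j) : f i + 2 * (j - i : ℕ) ≤ f j := by
  obtain ⟨d, hd⟩ : ∃ d, (j : ℕ) = i + d := ⟨j - i, by have : (i : ℕ) ≤ j := hij; omega⟩
  induction d generalizing j with
  | zero => rw [show j = i from Fin.ext hd]; simp
  | succ d ih =>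
    have hlt : (i : ℕ) + d < n := by omega
    have hprev := ih (j := ⟨i + d, hlt⟩) (Fin.le_def.mpr (by simp)) rfl
    have hstep : f ⟨i + d, hlt⟩ < f j := hf (Fin.lt_def.mpr (by simp; omega))
    have := heven ⟨i + d, hlt⟩
    have := heven j
    simp only at hprev
    omega

def hookRow {k : ℕ} (c : Fin (k + 1)) : Fin k → ℕ := fun j => 2 * j + zeroTwoStep c j

lemma hookRow_strictMono {k : ℕ} (c : Fin (k + 1)) : StrictMono (hookRow c) :=
  (Fin.val_strictMono.const_mul two_pos).add_monotone (zeroTwoStep_monotone c)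

lemma exists_hookRow_eq {k : ℕ} (hk : 0 < k) {r : Fin k → ℕ} (hr : StrictMono r)
    (heven : ∀ j, 2 ∣ r j)
    (hlast : r ⟨k - 1, Nat.sub_lt hk Nat.one_pos⟩ ≤ 2 * k) : ∃ c, hookRow c = r := by
  have hbounds (j : Fin k) : 2 * (j : ℕ) ≤ r j ∧ r j ≤ 2 * j + 2 := by
    have hfrom0 := add_two_mul_le_of_strictMono hr heven (i := ⟨0, hk⟩) (j := j) (Nat.zero_le _)
    have htolast := add_two_mul_le_of_strictMono hr heven (i := j)
      (j := ⟨k - 1, Nat.sub_lt hk Nat.one_pos⟩) (Fin.le_def.mpr (by simp; omega))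
    simp only at hfrom0 htolast
    omega
  have hmono : Monotone fun j : Fin k => r j - 2 * j := fun i j hij => by
    have hgain := add_two_mul_le_of_strictMono hr heven hij
    have hij' : (i : ℕ) ≤ j := hij
    have hi := hbounds i
    simp only; omega
  obtain ⟨c, hc⟩ := exists_zeroTwoStep_eq hmono fun j => by
    have := hbounds j; have := heven j; omega
  refine ⟨c, funext fun j => ?_⟩
  have hcj := congrFun hc j
  have hj := hbounds j
  simp only [hookRow] at hcj ⊢
  omega

def hookFilling {k m : ℕ} (p : Fin (k + 1) × Fin (m + 1)) : (Fin k → ℕ) × (Fin m → ℕ) :=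
  (hookRow p.1, zeroTwoStep p.2)

lemma hookFilling_injective {k m : ℕ} : Function.Injective (hookFilling (k := k) (m := m)) := by
  rintro ⟨c, s⟩ ⟨c', s'⟩ h
  simp only [hookFilling, Prod.mk.injEq] at h
  have hrow : zeroTwoStep c = zeroTwoStep c' :=
    funext fun j => Nat.add_left_cancel (congrFun h.1 j)
  rw [zeroTwoStep_injective hrow, zeroTwoStep_injective h.2]

def admissibleThresholds (k m : ℕ) : Finset (Fin (k + 1) × Fin (m + 1)) :=
  {p | (p.1 = 0 → p.2 = 0) ∧ (p.2 = Fin.last m → p.1 = Fin.last k)}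

lemma card_admissibleThresholds {k m : ℕ} (hk : 0 < k) (hm : 0 < m) :
    #(admissibleThresholds k m) = 2 + k * m := by
  have hsplit : admissibleThresholds k m =
      disjUnion {(0, 0), (Fin.last k, Fin.last m)} (Ioi 0 ×ˢ Iio (Fin.last m)) (by
        simp [Fin.ext_iff]; omega) := by
    ext ⟨c, s⟩
    simp only [admissibleThresholds, mem_filter, mem_univ, true_and, mem_disjUnion, mem_insert,
      mem_singleton, Prod.mk.injEq, mem_product, mem_Ioi, mem_Iio, Fin.ext_iff, Fin.lt_def,
      Fin.val_zero, Fin.val_last]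
    omega
  rw [hsplit, card_disjUnion, card_product, Fin.card_Ioi, Fin.card_Iio,
    card_pair (by simp [Fin.ext_iff]; omega)]
  simp

def IsEvenHookFilling {k m : ℕ} (hk : 0 < k) (hm : 0 < m)
    (Q : (Fin k → ℕ) × (Fin m → ℕ)) : Prop :=
  (∀ j, 2 ∣ Q.1 j) ∧ (∀ i, 2 ∣ Q.2 i) ∧
    StrictMono Q.1 ∧ Monotone Q.2 ∧
    Q.1 ⟨0, hk⟩ ≤ Q.2 ⟨0, hm⟩ ∧
    Q.2 ⟨m - 1, Nat.sub_lt hm Nat.one_pos⟩ ≤ 2 ∧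
    Q.1 ⟨k - 1, Nat.sub_lt hk Nat.one_pos⟩ ≤
      Q.2 ⟨m - 1, Nat.sub_lt hm Nat.one_pos⟩ + 2 * k - 2

section

variable {k m : ℕ} (hk : 0 < k) (hm : 0 < m)

lemma isEvenHookFilling_hookFilling {p : Fin (k + 1) × Fin (m + 1)}
    (hp : p ∈ admissibleThresholds k m) : IsEvenHookFilling hk hm (hookFilling p) := by
  obtain ⟨c, s⟩ := p
  simp only [admissibleThresholds, mem_filter, mem_univ, true_and] at hp
  have hrow (j) := zeroTwoStep_eq_zero_or_two c j
  have hcol (i) := zeroTwoStep_eq_zero_or_two s i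
  refine ⟨fun j => ?_, fun i => ?_, hookRow_strictMono c, zeroTwoStep_monotone s, ?_, ?_, ?_⟩
  · simp only [hookFilling, hookRow]; rcases hrow j with h | h <;> omega
  · simp only [hookFilling]; rcases hcol i with h | h <;> omega
  · simp only [hookFilling, hookRow, zeroTwoStep_first hk, zeroTwoStep_first hm]
    split_ifs <;> simp_all
  · simp only [hookFilling]; rcases hcol ⟨m - 1, Nat.sub_lt hm Nat.one_pos⟩ with h | h <;> omega
  · simp only [hookFilling, hookRow, zeroTwoStep_last hk, zeroTwoStep_last hm]
    split_ifs <;> simp_all <;> omega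

lemma exists_hookFilling_eq {Q : (Fin k → ℕ) × (Fin m → ℕ)} (hQ : IsEvenHookFilling hk hm Q) :
    ∃ p ∈ admissibleThresholds k m, hookFilling p = Q := by
  obtain ⟨r, g⟩ := Q
  obtain ⟨hrow_even, hcol_even, hrow_mono, hcol_mono, hcorner, hcol_last, hrow_last⟩ := hQ
  obtain ⟨s, hs⟩ := exists_zeroTwoStep_eq hcol_mono fun i => by
    have := hcol_mono (Fin.le_def.mpr (by simp; omega) : i ≤ ⟨m - 1, Nat.sub_lt hm Nat.one_pos⟩)
    have := hcol_even i
    omega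
  obtain ⟨c, hc⟩ := exists_hookRow_eq hk hrow_mono hrow_even (by omega)
  refine ⟨(c, s), ?_, Prod.ext hc hs⟩
  subst hc hs
  simp only [admissibleThresholds, mem_filter, mem_univ, true_and]
  simp only [hookRow, zeroTwoStep_first hk, zeroTwoStep_first hm, zeroTwoStep_last hk,
    zeroTwoStep_last hm] at hcorner hrow_last
  constructor
  · intro hc0
    by_contra hs0
    simp only [hc0, hs0, if_true, if_false] at hcorner
    omega
  · intro hs_last
    by_contra hc_last
    simp only [hs_last, hc_last, if_true, if_false] at hrow_last
    omega

end

end HookFilling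

open HookFilling

/-- The number of fillings `Q` of the hook diagram `(k,1^m)` by nonnegative even integers
which are strictly increasing across the row, weakly increasing down the column (the column
includes the corner box, which is the first row entry), and satisfy `Q(b') ≤ 2` and
`Q(b) ≤ Q(b') + 2k − 2` (where `b = (1,k)` is the last box of the row and `b' = (m+1,1)` is
the last box of the column), is exactly `2 + km`.  Here a filling is encoded as a pair
`(Q.1, Q.2)` with `Q.1 j = Q(1, j+1)` the row entries and `Q.2 i = Q(i+2, 1)` the column
entries below the corner. -/
theorem card_even_hook_fillings (k m : ℕ) (hk : 0 < k) (hm : 0 < m) :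
    Nat.card {Q : (Fin k → ℕ) × (Fin m → ℕ) //
      (∀ j, 2 ∣ Q.1 j) ∧ (∀ i, 2 ∣ Q.2 i) ∧
      StrictMono Q.1 ∧ Monotone Q.2 ∧
      Q.1 ⟨0, hk⟩ ≤ Q.2 ⟨0, hm⟩ ∧
      Q.2 ⟨m - 1, Nat.sub_lt hm Nat.one_pos⟩ ≤ 2 ∧
      Q.1 ⟨k - 1, Nat.sub_lt hk Nat.one_pos⟩ ≤
        Q.2 ⟨m - 1, Nat.sub_lt hm Nat.one_pos⟩ + 2 * k - 2} = 2 + k * m := by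
  change Nat.card {Q // IsEvenHookFilling hk hm Q} = _
  have hfillings : {Q | IsEvenHookFilling hk hm Q} = hookFilling '' admissibleThresholds k m :=
    Set.ext fun Q => ⟨exists_hookFilling_eq hk hm,
      fun ⟨_, hp, hpQ⟩ => hpQ ▸ isEvenHookFilling_hookFilling hk hm hp⟩
  rw [← Set.coe_ofPred, hfillings, Nat.card_image_of_injective hookFilling_injective,
    Nat.card_coe_set_eq, Set.ncard_coe_finset, card_admissibleThresholds hk hm]
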